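/- Let r, γ, T* > 0, let ρ₀ ∈ L^∞(ℝ^d) with ρ₀ ≥ 0 and ‖ρ₀‖_{L^∞} ≤ r, and let ρ, ψ ∈ B_{T*,γ}(r). Then for all t ∈ [0, T*] and x ∈ ℝ^d, | ρ₀(x) [ exp(−∫₀ᵗ h(ρ_s, x) ds) − exp(−∫₀ᵗ h(ψ_s, x) ds) ] | ≤ r ⟨c₁⟩ t e^{γ⟨c₂⟩t} ‖ρ − ψ‖_{T*,γ}. -/

import Mathlib

open MeasureTheory Set

noncomputable section

/-- Euclidean space `ℝ^d`, modeled as functions `Fin d → ℝ`. -/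
abbrev Rd (d : ℕ) := Fin d → ℝ

/-- The (sup) `L^∞` norm of a function on `ℝ^d`. -/
def linf {d : ℕ} (f : Rd d → ℝ) : ℝ := ⨆ x, |f x|

/-- Membership in `L^∞(ℝ^d)`: measurable and (everywhere) bounded. -/
def MemLinf {d : ℕ} (f : Rd d → ℝ) : Prop := Measurable f ∧ ∃ M : ℝ, ∀ x, |f x| ≤ M

/-- `h(ρ,x) = (1/2) ∬ (c₁(x,y;z)+c₁(y,x;z)) ρ(y) dy dz + ⟨c₂⟩`. -/
def hker {d : ℕ} (c₁ : Rd d → Rd d → Rd d → ℝ) (C2 : ℝ) (ρ : Rd d → ℝ) (x : Rd d) : ℝ :=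
  1/2 * (∫ y, ∫ z, (c₁ x y z + c₁ y x z) * ρ y) + C2

/-- `R₂(ρ,x)`, the positive part of the right-hand side of the kinetic equation. -/
def R2 {d : ℕ} (c₁ : Rd d → Rd d → Rd d → ℝ) (c₂ : Rd d → Rd d → ℝ)
    (φ₁ φ₂ : Rd d → ℝ) (ρ : Rd d → ℝ) (x : Rd d) : ℝ :=
  1/2 * (∫ y, ∫ z, c₁ y z x * Real.exp (-∫ u, φ₁ (x - u) * ρ u) * ρ y * ρ z)
    + 1/2 * (∫ y, ∫ z, (c₁ x y z + c₁ y x z) *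
        (1 - Real.exp (-∫ u, φ₁ (z - u) * ρ u)) * ρ x * ρ y)
    + (∫ y, c₂ y x * Real.exp (-∫ u, φ₂ (x - u) * ρ u) * ρ y)
    + (∫ y, c₂ x y * (1 - Real.exp (-∫ u, φ₂ (y - u) * ρ u)) * ρ x)

/-- The fixed point map `F` given by the right-hand side of the integral equation. -/
def Fmap {d : ℕ} (c₁ : Rd d → Rd d → Rd d → ℝ) (c₂ : Rd d → Rd d → ℝ)
    (φ₁ φ₂ : Rd d → ℝ) (C2 : ℝ) (ρ₀ : Rd d → ℝ) (ρ : ℝ → Rd d → ℝ) (t : ℝ) (x : Rd d) : ℝ :=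
  ρ₀ x * Real.exp (-∫ s in (0:ℝ)..t, hker c₁ C2 (ρ s) x)
    + ∫ s in (0:ℝ)..t, R2 c₁ c₂ φ₁ φ₂ (ρ s) x * Real.exp (-∫ σ in s..t, hker c₁ C2 (ρ σ) x)

/-- The weighted norm `‖ρ‖_{T,γ} = sup_{t∈[0,T]} e^{-γ⟨c₂⟩t} ‖ρ_t‖_{L^∞}`. -/
def normTg {d : ℕ} (T γ C2 : ℝ) (ρ : ℝ → Rd d → ℝ) : ℝ :=
  ⨆ t : Icc (0:ℝ) T, Real.exp (-(γ * C2 * t.1)) * linf (ρ t.1)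

/-- Continuity on `S ⊆ ℝ` of a curve of functions, in the `L^∞` norm. -/
def LinfContOn {d : ℕ} (S : Set ℝ) (ρ : ℝ → Rd d → ℝ) : Prop :=
  ∀ t ∈ S, ∀ ε > 0, ∃ δ > 0, ∀ s ∈ S, |s - t| < δ → linf (fun x => ρ s x - ρ t x) < ε

/-- Membership in the ball `B_{T,γ}(r) ⊆ C([0,T] → L^∞)`. -/
def memB {d : ℕ} (T γ C2 r : ℝ) (ρ : ℝ → Rd d → ℝ) : Prop :=
  LinfContOn (Icc 0 T) ρ ∧ (∀ t ∈ Icc (0:ℝ) T, MemLinf (ρ t)) ∧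
    (∀ t ∈ Icc (0:ℝ) T, ∀ x, 0 ≤ ρ t x) ∧ normTg T γ C2 ρ ≤ r

/-- Differentiability at `t` (within `S ⊆ ℝ`) of a curve, in the `L^∞` norm,
with derivative `g`. -/
def HasLinfDerivWithinAt {d : ℕ} (ρ : ℝ → Rd d → ℝ) (g : Rd d → ℝ) (S : Set ℝ) (t : ℝ) : Prop :=
  ∀ ε > 0, ∃ δ > 0, ∀ s ∈ S, |s - t| < δ →
    linf (fun x => ρ s x - ρ t x - (s - t) * g x) ≤ ε * |s - t|

/-- The right-hand side of the kinetic equation: `−ρ(x) h(ρ,x) + R₂(ρ,x)`. -/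
def kderiv {d : ℕ} (c₁ : Rd d → Rd d → Rd d → ℝ) (c₂ : Rd d → Rd d → ℝ)
    (φ₁ φ₂ : Rd d → ℝ) (C2 : ℝ) (ρ : Rd d → ℝ) : Rd d → ℝ :=
  fun x => -(ρ x) * hker c₁ C2 ρ x + R2 c₁ c₂ φ₁ φ₂ ρ x

/-- `ρ` is a (local) classical solution of the kinetic equation on `[0,T]` with initial
value `ρ₀`: nonnegative and `L^∞`-valued, continuously differentiable in the `L^∞` norm,
and satisfying `d/dt ρ_t = −ρ_t·h(ρ_t,·) + R₂(ρ_t,·)`, `ρ_0 = ρ₀`. -/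
def IsSol {d : ℕ} (c₁ : Rd d → Rd d → Rd d → ℝ) (c₂ : Rd d → Rd d → ℝ)
    (φ₁ φ₂ : Rd d → ℝ) (C2 : ℝ) (ρ₀ : Rd d → ℝ) (T : ℝ) (ρ : ℝ → Rd d → ℝ) : Prop :=
  (∀ t ∈ Icc (0:ℝ) T, MemLinf (ρ t)) ∧ (∀ t ∈ Icc (0:ℝ) T, ∀ x, 0 ≤ ρ t x) ∧
    ρ 0 = ρ₀ ∧
    (∀ t ∈ Icc (0:ℝ) T, HasLinfDerivWithinAt ρ (kderiv c₁ c₂ φ₁ φ₂ C2 (ρ t)) (Icc 0 T) t) ∧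
    LinfContOn (Icc 0 T) (fun t => kderiv c₁ c₂ φ₁ φ₂ C2 (ρ t))

/-! Since `t ↦ e^{-t}` is `1`-Lipschitz on `[0, ∞)` and `h ≥ 0`, the difference of the two
exponentials is at most `∫₀ᵗ |h(ρ_s, x) - h(ψ_s, x)| ds`. The map `ρ ↦ h(ρ, x)` is affine and its
linear part has `L^∞ → ℝ` norm `⟨c₁⟩`, by the two integral normalisations of `c₁` involving the
slot `x`. Finally `‖ρ_s - ψ_s‖_∞ ≤ e^{γ⟨c₂⟩s} ‖ρ - ψ‖_{T*,γ} ≤ e^{γ⟨c₂⟩t} ‖ρ - ψ‖_{T*,γ}` for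
`s ≤ t`, and `|ρ₀(x)| ≤ r`. -/

open Real

lemma abs_exp_neg_sub_exp_neg_le {a b : ℝ} (ha : 0 ≤ a) (hb : 0 ≤ b) :
    |exp (-a) - exp (-b)| ≤ |a - b| := by
  wlog hab : a ≤ b generalizing a b
  · rw [abs_sub_comm, abs_sub_comm a b]; exact this hb ha (le_of_not_ge hab)
  rw [abs_of_nonneg (sub_nonneg.2 (exp_le_exp.2 (neg_le_neg hab))), abs_sub_comm,
    abs_of_nonneg (sub_nonneg.2 hab)]
  calc exp (-a) - exp (-b) = exp (-a) * (1 - exp (-(b - a))) := by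
        rw [mul_sub, mul_one, ← exp_add]; ring_nf
    _ ≤ 1 * (b - a) :=
        mul_le_mul (exp_le_one_iff.2 (neg_nonpos.2 ha)) (by linarith [one_sub_le_exp_neg (b - a)])
          (sub_nonneg.2 (exp_le_one_iff.2 (neg_nonpos.2 (sub_nonneg.2 hab)))) zero_le_one
    _ = b - a := one_mul _

lemma abs_exp_neg_integral_sub_le {f g : ℝ → ℝ} {a b M : ℝ} (hab : a ≤ b)
    (hf : IntervalIntegrable f volume a b) (hg : IntervalIntegrable g volume a b)
    (hf₀ : ∀ s ∈ Icc a b, 0 ≤ f s) (hg₀ : ∀ s ∈ Icc a b, 0 ≤ g s)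
    (hfg : ∀ s ∈ Icc a b, |f s - g s| ≤ M) :
    |exp (-∫ s in a..b, f s) - exp (-∫ s in a..b, g s)| ≤ M * (b - a) := by
  refine (abs_exp_neg_sub_exp_neg_le (intervalIntegral.integral_nonneg hab hf₀)
    (intervalIntegral.integral_nonneg hab hg₀)).trans ?_
  rw [← intervalIntegral.integral_sub hf hg, ← abs_of_nonneg (sub_nonneg.2 hab)]
  exact intervalIntegral.norm_integral_le_of_norm_le_const (f := fun s => f s - g s) fun s hs =>
    hfg s (Ioc_subset_Icc_self (uIoc_of_le hab ▸ hs))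

-- The boundedness half of `MemLinf`.
def BddLinf {d : ℕ} (f : Rd d → ℝ) : Prop := ∃ M : ℝ, ∀ x, |f x| ≤ M

section Linf

variable {d : ℕ} {f g : Rd d → ℝ}

lemma linf_nonneg (f : Rd d → ℝ) : 0 ≤ linf f :=
  Real.iSup_nonneg fun x => abs_nonneg (f x)

lemma abs_le_linf (hf : BddLinf f) (x : Rd d) : |f x| ≤ linf f := by
  obtain ⟨M, hM⟩ := hf
  exact le_ciSup ⟨M, by rintro _ ⟨y, rfl⟩; exact hM y⟩ x

lemma linf_le {M : ℝ} (hM : ∀ x, |f x| ≤ M) : linf f ≤ M :=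
  ciSup_le hM

lemma linf_sub_comm : linf (fun x => f x - g x) = linf fun x => g x - f x := by
  simp only [linf, abs_sub_comm]

lemma BddLinf.sub (hf : BddLinf f) (hg : BddLinf g) : BddLinf fun x => f x - g x := by
  obtain ⟨M, hM⟩ := hf
  obtain ⟨N, hN⟩ := hg
  exact ⟨M + N, fun x => (abs_sub _ _).trans (add_le_add (hM x) (hN x))⟩

lemma linf_sub_le (hf : BddLinf f) (hg : BddLinf g) :
    linf (fun x => f x - g x) ≤ linf f + linf g :=
  linf_le fun x => (abs_sub _ _).trans (add_le_add (abs_le_linf hf x) (abs_le_linf hg x))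

lemma linf_le_linf_sub_add (hf : BddLinf f) (hg : BddLinf g) :
    linf f ≤ linf (fun x => f x - g x) + linf g :=
  linf_le fun x => by
    simpa using (abs_add_le (f x - g x) (g x)).trans
      (add_le_add (abs_le_linf (hf.sub hg) x) (abs_le_linf hg x))

lemma abs_linf_sub_linf_le (hf : BddLinf f) (hg : BddLinf g) :
    |linf f - linf g| ≤ linf fun x => f x - g x := by
  have hfg := linf_le_linf_sub_add hf hg
  have hgf := linf_le_linf_sub_add hg hf
  rw [← linf_sub_comm] at hgf
  exact abs_sub_le_iff.2 ⟨by linarith, by linarith⟩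

end Linf

section Curve

variable {d : ℕ} {S : Set ℝ} {ρ ψ : ℝ → Rd d → ℝ}

lemma LinfContOn.continuousOn_linf (hc : LinfContOn S ρ) (hb : ∀ t ∈ S, BddLinf (ρ t)) :
    ContinuousOn (fun t => linf (ρ t)) S := by
  rw [Metric.continuousOn_iff]
  intro t ht ε hε
  obtain ⟨δ, hδ, hδε⟩ := hc t ht ε hε
  exact ⟨δ, hδ, fun s hs hst =>
    (abs_linf_sub_linf_le (hb s hs) (hb t ht)).trans_lt (hδε s hs hst)⟩

lemma LinfContOn.exists_linf_le (hS : IsCompact S) (hc : LinfContOn S ρ)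
    (hb : ∀ t ∈ S, BddLinf (ρ t)) : ∃ B, ∀ t ∈ S, linf (ρ t) ≤ B := by
  obtain ⟨B, hB⟩ := (hS.image_of_continuousOn (hc.continuousOn_linf hb)).bddAbove
  exact ⟨B, fun t ht => hB ⟨t, ht, rfl⟩⟩

lemma normTg_nonneg (T γ C2 : ℝ) (ρ : ℝ → Rd d → ℝ) : 0 ≤ normTg T γ C2 ρ :=
  Real.iSup_nonneg fun _ => mul_nonneg (exp_pos _).le (linf_nonneg _)

lemma linf_le_exp_mul_normTg {T γ C2 t B : ℝ} (hB : ∀ s ∈ Icc 0 T, linf (ρ s) ≤ B)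
    (ht : t ∈ Icc 0 T) : linf (ρ t) ≤ exp (γ * C2 * t) * normTg T γ C2 ρ := by
  have hbdd : BddAbove (range fun s : Icc (0:ℝ) T => exp (-(γ * C2 * s.1)) * linf (ρ s.1)) := by
    refine ⟨exp (|γ * C2| * T) * B, ?_⟩
    rintro _ ⟨⟨s, hs⟩, rfl⟩
    have hexp : -(γ * C2 * s) ≤ |γ * C2| * T :=
      calc -(γ * C2 * s) ≤ |γ * C2| * s := by
            rw [← abs_of_nonneg hs.1, ← abs_mul, abs_of_nonneg hs.1]; exact neg_le_abs _
        _ ≤ |γ * C2| * T := mul_le_mul_of_nonneg_left hs.2 (abs_nonneg _)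
    exact mul_le_mul (exp_le_exp.2 hexp) (hB s hs) (linf_nonneg _) (exp_pos _).le
  calc linf (ρ t) = exp (γ * C2 * t) * (exp (-(γ * C2 * t)) * linf (ρ t)) := by
        rw [← mul_assoc, ← exp_add, add_neg_cancel, exp_zero, one_mul]
    _ ≤ exp (γ * C2 * t) * normTg T γ C2 ρ :=
        mul_le_mul_of_nonneg_left (le_ciSup hbdd ⟨t, ht⟩) (exp_pos _).le

lemma abs_sub_le_exp_mul_normTg {T γ C2 s t : ℝ} (hγC2 : 0 ≤ γ * C2)
    (hρc : LinfContOn (Icc 0 T) ρ) (hρb : ∀ t ∈ Icc 0 T, BddLinf (ρ t))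
    (hψc : LinfContOn (Icc 0 T) ψ) (hψb : ∀ t ∈ Icc 0 T, BddLinf (ψ t))
    (ht : t ≤ T) (hs : s ∈ Icc 0 t) (y : Rd d) :
    |ρ s y - ψ s y| ≤ exp (γ * C2 * t) * normTg T γ C2 fun t x => ρ t x - ψ t x := by
  have hsT : s ∈ Icc 0 T := ⟨hs.1, hs.2.trans ht⟩
  -- `normTg` is a real `⨆`, hence junk unless bounded; continuity on the compact `[0, T]`
  -- supplies the bound.
  obtain ⟨Bρ, hBρ⟩ := hρc.exists_linf_le isCompact_Icc hρb
  obtain ⟨Bψ, hBψ⟩ := hψc.exists_linf_le isCompact_Icc hψb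
  have hB : ∀ t ∈ Icc 0 T, linf (fun x => ρ t x - ψ t x) ≤ Bρ + Bψ := fun t ht =>
    (linf_sub_le (hρb t ht) (hψb t ht)).trans (add_le_add (hBρ t ht) (hBψ t ht))
  calc |ρ s y - ψ s y| ≤ linf fun y => ρ s y - ψ s y :=
        abs_le_linf ((hρb s hsT).sub (hψb s hsT)) y
    _ ≤ exp (γ * C2 * s) * normTg T γ C2 fun t x => ρ t x - ψ t x :=
        linf_le_exp_mul_normTg hB hsT
    _ ≤ exp (γ * C2 * t) * normTg T γ C2 fun t x => ρ t x - ψ t x := by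
        gcongr
        exacts [normTg_nonneg _ _ _ _, hs.2]

end Curve

lemma MeasureTheory.Integrable.mul_bdd_fst {α β : Type*} [MeasurableSpace α] [MeasurableSpace β]
    {μ : Measure (α × β)} {K : α × β → ℝ} (hK : Integrable K μ) {u : α → ℝ}
    (hu : Measurable u)
    {M : ℝ} (hM : ∀ a, |u a| ≤ M) : Integrable (fun p => K p * u p.1) μ :=
  hK.mul_bdd (hu.comp measurable_fst).aestronglyMeasurable
    (Filter.Eventually.of_forall fun p => hM p.1)

section Kernel

variable {d : ℕ} {c₁ : Rd d → Rd d → Rd d → ℝ} {C1 C2 : ℝ} {x : Rd d}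

lemma hker_nonneg (hc₁ : ∀ x y z, 0 ≤ c₁ x y z) (hC2 : 0 ≤ C2) {f : Rd d → ℝ}
    (hf : ∀ y, 0 ≤ f y) : 0 ≤ hker c₁ C2 f x := by
  refine add_nonneg (mul_nonneg (by norm_num) ?_) hC2
  exact integral_nonneg fun y => integral_nonneg fun z =>
    mul_nonneg (add_nonneg (hc₁ _ _ _) (hc₁ _ _ _)) (hf y)

lemma abs_hker_sub_hker_le (hc₁ : ∀ x y z, 0 ≤ c₁ x y z)
    (hint₁₃ : Integrable fun p : Rd d × Rd d => c₁ p.1 x p.2)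
    (hint₂₃ : Integrable fun p : Rd d × Rd d => c₁ x p.1 p.2)
    (hval₁₃ : (∫ y, ∫ z, c₁ y x z) = C1) (hval₂₃ : (∫ y, ∫ z, c₁ x y z) = C1)
    {f g : Rd d → ℝ} (hf : MemLinf f) (hg : MemLinf g) {D : ℝ}
    (hD : ∀ y, |f y - g y| ≤ D) :
    |hker c₁ C2 f x - hker c₁ C2 g x| ≤ C1 * D := by
  set K : Rd d × Rd d → ℝ := fun p => c₁ x p.1 p.2 + c₁ p.1 x p.2
  have hK : Integrable K := hint₂₃.add hint₁₃
  have hK_nonneg : ∀ p, 0 ≤ K p := fun p => add_nonneg (hc₁ _ _ _) (hc₁ _ _ _)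
  have hK_integral : ∫ p, K p = 2 * C1 := by
    rw [integral_add hint₂₃ hint₁₃, Measure.volume_eq_prod, integral_prod _ hint₂₃,
      integral_prod _ hint₁₃, hval₂₃, hval₁₃]
    ring
  have hKmul : ∀ u : Rd d → ℝ, MemLinf u → Integrable fun p => K p * u p.1 :=
    fun u hu => hK.mul_bdd_fst hu.1 hu.2.choose_spec
  have hhker : ∀ u, MemLinf u → hker c₁ C2 u x = 1/2 * (∫ p, K p * u p.1) + C2 := by
    intro u hu
    rw [hker, Measure.volume_eq_prod, integral_prod _ (hKmul u hu)]
  rw [hhker f hf, hhker g hg, add_sub_add_right_eq_sub, ← mul_sub,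
    ← integral_sub (hKmul f hf) (hKmul g hg), abs_mul, abs_of_pos (by norm_num : (0:ℝ) < 1/2)]
  calc 1/2 * |∫ p, K p * f p.1 - K p * g p.1| ≤ 1/2 * ∫ p, K p * D := by
        gcongr
        refine norm_integral_le_of_norm_le (f := fun p => K p * f p.1 - K p * g p.1)
          (hK.mul_const D) (Filter.Eventually.of_forall fun p => ?_)
        rw [← mul_sub, norm_mul, Real.norm_of_nonneg (hK_nonneg p)]
        exact mul_le_mul_of_nonneg_left (hD p.1) (hK_nonneg p)
    _ = C1 * D := by rw [integral_mul_const, hK_integral]; ring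

lemma LinfContOn.continuousOn_hker (hc₁ : ∀ x y z, 0 ≤ c₁ x y z)
    (hint₁₃ : Integrable fun p : Rd d × Rd d => c₁ p.1 x p.2)
    (hint₂₃ : Integrable fun p : Rd d × Rd d => c₁ x p.1 p.2)
    (hval₁₃ : (∫ y, ∫ z, c₁ y x z) = C1) (hval₂₃ : (∫ y, ∫ z, c₁ x y z) = C1)
    {S : Set ℝ} {ρ : ℝ → Rd d → ℝ} (hc : LinfContOn S ρ)
    (hm : ∀ t ∈ S, MemLinf (ρ t)) :
    ContinuousOn (fun t => hker c₁ C2 (ρ t) x) S := by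
  have hC1 : 0 ≤ C1 :=
    hval₂₃ ▸ integral_nonneg fun y => integral_nonneg fun z => hc₁ x y z
  rw [Metric.continuousOn_iff]
  intro t ht ε hε
  obtain ⟨δ, hδ, hδε⟩ := hc t ht (ε / (C1 + 1)) (by positivity)
  refine ⟨δ, hδ, fun s hs hst => ?_⟩
  calc |hker c₁ C2 (ρ s) x - hker c₁ C2 (ρ t) x| ≤ C1 * linf (fun y => ρ s y - ρ t y) :=
        abs_hker_sub_hker_le hc₁ hint₁₃ hint₂₃ hval₁₃ hval₂₃ (hm s hs) (hm t ht)
          (abs_le_linf (BddLinf.sub (hm s hs).2 (hm t ht).2))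
    _ ≤ C1 * (ε / (C1 + 1)) := by gcongr; exact (hδε s hs hst).le
    _ < ε := by rw [← mul_div_assoc, div_lt_iff₀ (by positivity)]; nlinarith

end Kernel

theorem statement10_general {d : ℕ}
    (c₁ : Rd d → Rd d → Rd d → ℝ) (C1 : ℝ)
    (hc₁nn : ∀ x y z, 0 ≤ c₁ x y z)
    (hc₁int₁₃ : ∀ y, Integrable fun p : Rd d × Rd d => c₁ p.1 y p.2)
    (hc₁int₂₃ : ∀ x, Integrable fun p : Rd d × Rd d => c₁ x p.1 p.2)
    (hc₁val₁₃ : ∀ y, (∫ x, ∫ z, c₁ x y z) = C1)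
    (hc₁val₂₃ : ∀ x, (∫ y, ∫ z, c₁ x y z) = C1)
    (c₂ : Rd d → Rd d → ℝ) (C2 : ℝ)
    (hc₂nn : ∀ x y, 0 ≤ c₂ x y)
    (hc₂val₂ : ∀ x, (∫ y, c₂ x y) = C2)
    (r γ T' : ℝ) (hγ : 0 < γ)
    (ρ₀ : Rd d → ℝ) (hρ₀mem : MemLinf ρ₀)
    (hρ₀r : linf ρ₀ ≤ r)
    (ρ ψ : ℝ → Rd d → ℝ) (hρ : memB T' γ C2 r ρ) (hψ : memB T' γ C2 r ψ) :
    ∀ t ∈ Icc (0:ℝ) T', ∀ x : Rd d,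
      |ρ₀ x * (Real.exp (-∫ s in (0:ℝ)..t, hker c₁ C2 (ρ s) x)
          - Real.exp (-∫ s in (0:ℝ)..t, hker c₁ C2 (ψ s) x))|
        ≤ r * C1 * t * Real.exp (γ * C2 * t) * normTg T' γ C2 (fun t x => ρ t x - ψ t x) := by
  intro t ht x
  obtain ⟨hρc, hρm, hρnn, -⟩ := hρ
  obtain ⟨hψc, hψm, hψnn, -⟩ := hψ
  have hC2 : 0 ≤ C2 := hc₂val₂ x ▸ integral_nonneg fun y => hc₂nn x y
  have hsub : Icc 0 t ⊆ Icc 0 T' := Icc_subset_Icc_right ht.2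
  have hρ₀x : |ρ₀ x| ≤ r := (abs_le_linf hρ₀mem.2 x).trans hρ₀r
  have hint : ∀ σ : ℝ → Rd d → ℝ, LinfContOn (Icc 0 T') σ → (∀ s ∈ Icc 0 T', MemLinf (σ s)) →
      IntervalIntegrable (fun s => hker c₁ C2 (σ s) x) volume 0 t := fun σ hc hm =>
    ((hc.continuousOn_hker hc₁nn (hc₁int₁₃ x) (hc₁int₂₃ x) (hc₁val₁₃ x) (hc₁val₂₃ x)
      hm).mono hsub).intervalIntegrable_of_Icc ht.1
  have hdiff : ∀ s ∈ Icc 0 t, |hker c₁ C2 (ρ s) x - hker c₁ C2 (ψ s) x|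
      ≤ C1 * (exp (γ * C2 * t) * normTg T' γ C2 fun t x => ρ t x - ψ t x) := fun s hs =>
    abs_hker_sub_hker_le hc₁nn (hc₁int₁₃ x) (hc₁int₂₃ x) (hc₁val₁₃ x) (hc₁val₂₃ x)
      (hρm s (hsub hs)) (hψm s (hsub hs))
      (abs_sub_le_exp_mul_normTg (mul_nonneg hγ.le hC2) hρc (fun s hs => (hρm s hs).2) hψc
        (fun s hs => (hψm s hs).2) ht.2 hs)
  calc _ = |ρ₀ x| * |exp (-∫ s in (0:ℝ)..t, hker c₁ C2 (ρ s) x)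
          - exp (-∫ s in (0:ℝ)..t, hker c₁ C2 (ψ s) x)| := abs_mul _ _
    _ ≤ r * (C1 * (exp (γ * C2 * t) * normTg T' γ C2 fun t x => ρ t x - ψ t x) * (t - 0)) :=
        mul_le_mul hρ₀x (abs_exp_neg_integral_sub_le ht.1 (hint ρ hρc hρm) (hint ψ hψc hψm)
          (fun s hs => hker_nonneg hc₁nn hC2 (hρnn s (hsub hs)))
          (fun s hs => hker_nonneg hc₁nn hC2 (hψnn s (hsub hs))) hdiff)
          (abs_nonneg _) ((abs_nonneg _).trans hρ₀x)
    _ = _ := by ring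

theorem statement10 {d : ℕ} (hd : 1 ≤ d)
    (c₁ : Rd d → Rd d → Rd d → ℝ) (C1 : ℝ)
    (hc₁meas : Measurable fun p : Rd d × Rd d × Rd d => c₁ p.1 p.2.1 p.2.2)
    (hc₁nn : ∀ x y z, 0 ≤ c₁ x y z)
    (hc₁sym : ∀ x y z, c₁ x y z = c₁ y x z)
    (hc₁int₁₂ : ∀ z, Integrable fun p : Rd d × Rd d => c₁ p.1 p.2 z)
    (hc₁int₁₃ : ∀ y, Integrable fun p : Rd d × Rd d => c₁ p.1 y p.2)
    (hc₁int₂₃ : ∀ x, Integrable fun p : Rd d × Rd d => c₁ x p.1 p.2)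
    (hc₁val₁₂ : ∀ z, (∫ x, ∫ y, c₁ x y z) = C1)
    (hc₁val₁₃ : ∀ y, (∫ x, ∫ z, c₁ x y z) = C1)
    (hc₁val₂₃ : ∀ x, (∫ y, ∫ z, c₁ x y z) = C1)
    (c₂ : Rd d → Rd d → ℝ) (C2 : ℝ)
    (hc₂meas : Measurable fun p : Rd d × Rd d => c₂ p.1 p.2)
    (hc₂nn : ∀ x y, 0 ≤ c₂ x y)
    (hc₂int₁ : ∀ y, Integrable fun x => c₂ x y)
    (hc₂int₂ : ∀ x, Integrable fun y => c₂ x y)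
    (hc₂val₁ : ∀ y, (∫ x, c₂ x y) = C2)
    (hc₂val₂ : ∀ x, (∫ y, c₂ x y) = C2)
    (r γ T' : ℝ) (hr : 0 < r) (hγ : 0 < γ) (hT' : 0 < T')
    (ρ₀ : Rd d → ℝ) (hρ₀mem : MemLinf ρ₀) (hρ₀nn : ∀ x, 0 ≤ ρ₀ x)
    (hρ₀r : linf ρ₀ ≤ r)
    (ρ ψ : ℝ → Rd d → ℝ) (hρ : memB T' γ C2 r ρ) (hψ : memB T' γ C2 r ψ) :
    ∀ t ∈ Icc (0:ℝ) T', ∀ x : Rd d,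
      |ρ₀ x * (Real.exp (-∫ s in (0:ℝ)..t, hker c₁ C2 (ρ s) x)
          - Real.exp (-∫ s in (0:ℝ)..t, hker c₁ C2 (ψ s) x))|
        ≤ r * C1 * t * Real.exp (γ * C2 * t) * normTg T' γ C2 (fun t x => ρ t x - ψ t x) :=
  statement10_general c₁ C1 hc₁nn hc₁int₁₃ hc₁int₂₃ hc₁val₁₃ hc₁val₂₃ c₂ C2 hc₂nn hc₂val₂ r γ T' hγ
    ρ₀ hρ₀mem hρ₀r ρ ψ hρ hψ
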